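/- (Mignotte's bound) If P and Q are nonzero integer polynomials, then h(P) ≤ deg P + h(PQ) + log₂ √(deg(PQ) + 1), where h denotes the height. -/

import Mathlib

/-! With `H` the largest absolute value of a coefficient and `M` the Mahler measure: Vieta's
formulas bound every coefficient of `P` by `C(deg P, i) M(P) ≤ 2^(deg P) M(P)`; `M` is
multiplicative and at least `1` on nonzero integer polynomials, so `M(P) ≤ M(PQ)`; and Landau's
inequality gives `M(PQ) ≤ √(deg(PQ) + 1) H(PQ)`. Taking `log₂` of
`H(P) ≤ 2^(deg P) √(deg(PQ) + 1) H(PQ)` gives the bound. -/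

noncomputable def polyHeight (P : Polynomial ℤ) : ℝ :=
  max 0 (Real.logb 2 ((P.support.sup fun i => (P.coeff i).natAbs : ℕ) : ℝ))

open Polynomial Real

namespace Polynomial

theorem supNorm_map {A B : Type*} [NormedRing A] [NormedRing B] (v : A →+* B)
    (hv : ∀ a, ‖v a‖ = ‖a‖) (p : A[X]) : (p.map v).supNorm = p.supNorm := by
  simp only [supNorm_eq_iSup, coeff_map, hv]

theorem natAbs_coeff_le_sup_natAbs (P : ℤ[X]) (i : ℕ) :
    (P.coeff i).natAbs ≤ P.support.sup fun j => (P.coeff j).natAbs := by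
  by_cases hi : i ∈ P.support
  · exact Finset.le_sup (f := fun j => (P.coeff j).natAbs) hi
  · simp [notMem_support_iff.mp hi]

theorem supNorm_eq_sup_natAbs (P : ℤ[X]) :
    P.supNorm = ((P.support.sup fun i => (P.coeff i).natAbs : ℕ) : ℝ) := by
  have natAbs_eq_norm (n : ℤ) : (n.natAbs : ℝ) = ‖n‖ := by
    rw [Int.norm_eq_abs, Nat.cast_natAbs, Int.cast_abs]
  rcases P.support.eq_empty_or_nonempty with hP | hP
  · simp [support_eq_empty.mp hP]
  obtain ⟨i, hi⟩ := P.exists_eq_supNorm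
  obtain ⟨j, -, hj⟩ := Finset.exists_mem_eq_sup P.support hP fun j => (P.coeff j).natAbs
  apply le_antisymm
  · rw [hi, ← natAbs_eq_norm]
    exact_mod_cast natAbs_coeff_le_sup_natAbs P i
  · rw [hj, natAbs_eq_norm]
    exact P.le_supNorm j

theorem one_le_supNorm_of_ne_zero {P : ℤ[X]} (hP : P ≠ 0) : 1 ≤ P.supNorm := by
  obtain ⟨i, hi⟩ := support_nonempty.mpr hP
  calc (1 : ℝ) ≤ ‖P.coeff i‖ := by
        rw [Int.norm_eq_abs]; exact_mod_cast Int.one_le_abs (mem_support_iff.mp hi)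
    _ ≤ P.supNorm := P.le_supNorm i

theorem supNorm_le_two_pow_mul_sqrt_mul_supNorm_mul (P Q : ℂ[X]) (hQ : 1 ≤ Q.mahlerMeasure) :
    P.supNorm ≤ 2 ^ P.natDegree * √((P * Q).natDegree + 1) * (P * Q).supNorm := by
  obtain ⟨i, hi⟩ := P.exists_eq_supNorm
  calc P.supNorm = ‖P.coeff i‖ := hi
    _ ≤ P.natDegree.choose i * (P * Q).mahlerMeasure :=
      norm_coeff_le_choose_mul_mahlerMeasure_of_one_le_mahlerMeasure i P Q hQ
    _ ≤ 2 ^ P.natDegree * (P * Q).mahlerMeasure := by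
      gcongr
      · exact mahlerMeasure_nonneg _
      · exact_mod_cast Nat.choose_le_two_pow _ _
    _ ≤ 2 ^ P.natDegree * (√((P * Q).natDegree + 1) * (P * Q).supNorm) := by
      gcongr
      exact mahlerMeasure_le_sqrt_natDegree_add_one_mul_supNorm _
    _ = _ := (mul_assoc _ _ _).symm

theorem supNorm_le_two_pow_mul_sqrt_mul_supNorm_mul_of_ne_zero (P : ℤ[X]) {Q : ℤ[X]}
    (hQ : Q ≠ 0) :
    P.supNorm ≤ 2 ^ P.natDegree * √((P * Q).natDegree + 1) * (P * Q).supNorm := by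
  have hcast : ∀ R : ℤ[X], (R.map (Int.castRingHom ℂ)).supNorm = R.supNorm :=
    supNorm_map _ fun a => by simp [Int.norm_eq_abs]
  have hdeg : ∀ R : ℤ[X], (R.map (Int.castRingHom ℂ)).natDegree = R.natDegree :=
    natDegree_map_eq_of_injective (Int.castRingHom ℂ).injective_int
  simpa only [← Polynomial.map_mul, hcast, hdeg] using
    supNorm_le_two_pow_mul_sqrt_mul_supNorm_mul (P.map (Int.castRingHom ℂ)) _
      (one_le_mahlerMeasure_of_ne_zero hQ)

end Polynomial

theorem polyHeight_eq_max_logb_supNorm (P : ℤ[X]) : polyHeight P = max 0 (logb 2 P.supNorm) := by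
  rw [polyHeight, supNorm_eq_sup_natAbs]

theorem polyHeight_eq_logb_supNorm {P : ℤ[X]} (hP : P ≠ 0) :
    polyHeight P = logb 2 P.supNorm := by
  rw [polyHeight_eq_max_logb_supNorm,
    max_eq_right (logb_nonneg one_lt_two (one_le_supNorm_of_ne_zero hP))]

/-- Mignotte's bound: for nonzero integer polynomials `P` and `Q`,
`h(P) ≤ deg P + h(PQ) + log₂ √(deg(PQ) + 1)`. -/
theorem mignotte_bound (P Q : Polynomial ℤ) (hP : P ≠ 0) (hQ : Q ≠ 0) :
    polyHeight P ≤ (P.natDegree : ℝ) + polyHeight (P * Q) +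
      Real.logb 2 (Real.sqrt (((P * Q).natDegree : ℝ) + 1)) := by
  have hPQ : 1 ≤ (P * Q).supNorm := one_le_supNorm_of_ne_zero (mul_ne_zero hP hQ)
  have hsqrt : 0 < √(((P * Q).natDegree : ℝ) + 1) := by positivity
  rw [polyHeight_eq_logb_supNorm hP]
  calc logb 2 P.supNorm
      ≤ logb 2 (2 ^ P.natDegree * √((P * Q).natDegree + 1) * (P * Q).supNorm) :=
        logb_le_logb_of_le one_lt_two (by linarith [one_le_supNorm_of_ne_zero hP])
          (supNorm_le_two_pow_mul_sqrt_mul_supNorm_mul_of_ne_zero P hQ)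
    _ = P.natDegree + logb 2 (P * Q).supNorm + logb 2 √((P * Q).natDegree + 1) := by
        rw [logb_mul (by positivity) (by linarith), logb_mul (by positivity) hsqrt.ne',
          logb_pow, logb_self_eq_one one_lt_two, mul_one]
        ring
    _ ≤ P.natDegree + polyHeight (P * Q) + logb 2 √((P * Q).natDegree + 1) := by
        rw [polyHeight_eq_max_logb_supNorm]
        gcongr
        exact le_max_right _ _
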